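/- Let z : ℕ → ℂ satisfy the Newton–Raphson recursion z(n+1) = (z(n)² − 1)/(2·z(n)) for all n, with initial condition satisfying Im(z(0)) < 0. Then the sequence z(n) converges to −i as n → ∞. -/

import Mathlib

/-!
The Möbius map `z ↦ (z + i) / (z - i)` conjugates Newton's map for `z² + 1` to squaring, and
sends the open lower half-plane onto the open unit disc with `−i ↦ 0`. Since Newton's map
preserves the lower half-plane, the conjugated orbit is `w₀ ^ 2 ^ n` with `‖w₀‖ < 1`, which
tends to `0`; transporting back, `z n` tends to `−i`.
-/

open Filter Topology Complex

section Cayley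

variable {K : Type*} [Field K]

def cayley (a z : K) : K := (z - a) / (z + a)

theorem cayley_newton [NeZero (2 : K)] {a z : K} (hz : z ≠ 0) :
    cayley a ((z ^ 2 + a ^ 2) / (2 * z)) = cayley a z ^ 2 := by
  have h2z : 2 * z ≠ 0 := mul_ne_zero two_ne_zero hz
  have hsub : (z ^ 2 + a ^ 2) / (2 * z) - a = (z - a) ^ 2 / (2 * z) := by
    field_simp; ring
  have hadd : (z ^ 2 + a ^ 2) / (2 * z) + a = (z + a) ^ 2 / (2 * z) := by
    field_simp; ring
  rw [cayley, cayley, hsub, hadd, div_pow, div_div_div_cancel_right₀ h2z]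

theorem cayley_newton_iterate [NeZero (2 : K)] {a : K} {z : ℕ → K}
    (hrec : ∀ n, z (n + 1) = (z n ^ 2 + a ^ 2) / (2 * z n)) (hz : ∀ n, z n ≠ 0) (n : ℕ) :
    cayley a (z n) = cayley a (z 0) ^ 2 ^ n := by
  induction n with
  | zero => simp
  | succ n ih => rw [hrec, cayley_newton (hz n), ih, ← pow_mul, pow_succ]

theorem one_sub_cayley {a z : K} (hz : z + a ≠ 0) : 1 - cayley a z = 2 * a / (z + a) := by
  rw [cayley]
  field_simp
  ring

theorem mul_one_add_cayley_div_one_sub_cayley [NeZero (2 : K)] {a z : K} (ha : a ≠ 0)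
    (hz : z + a ≠ 0) : a * (1 + cayley a z) / (1 - cayley a z) = z := by
  rw [div_eq_iff (by rw [one_sub_cayley hz]; exact div_ne_zero (mul_ne_zero two_ne_zero ha) hz),
    one_sub_cayley hz, cayley]
  field_simp
  ring

end Cayley

theorem tendsto_of_tendsto_cayley_zero {K : Type*} [NormedField K] [NeZero (2 : K)] {a : K}
    (ha : a ≠ 0) {z : ℕ → K} (hz : ∀ n, z n + a ≠ 0)
    (h : Tendsto (fun n => cayley a (z n)) atTop (𝓝 0)) : Tendsto z atTop (𝓝 a) := by
  have hcont : ContinuousAt (fun v : K => a * (1 + v) / (1 - v)) 0 :=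
    ((continuous_const.mul (continuous_const.add continuous_id)).continuousAt).div
      (continuous_const.sub continuous_id).continuousAt (by simp)
  have := hcont.tendsto.comp h
  simp only [Function.comp_def, mul_one_add_cayley_div_one_sub_cayley ha (hz _)] at this
  simpa using this

theorem tendsto_pow_two_pow_nhds_zero_of_norm_lt_one {R : Type*} [SeminormedRing R] {x : R}
    (hx : ‖x‖ < 1) : Tendsto (fun n : ℕ => x ^ 2 ^ n) atTop (𝓝 0) :=
  (tendsto_pow_atTop_nhds_zero_of_norm_lt_one hx).comp
    (tendsto_pow_atTop_atTop_of_one_lt one_lt_two)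

theorem Complex.im_sq_sub_one_div_two_mul (z : ℂ) :
    ((z ^ 2 - 1) / (2 * z)).im = z.im * (normSq z + 1) / (2 * normSq z) := by
  rcases eq_or_ne z 0 with rfl | hz
  · simp
  have : normSq z ≠ 0 := normSq_eq_zero.not.mpr hz
  simp only [pow_two, div_im, sub_im, mul_im, one_im, sub_zero, mul_re, re_ofNat, im_ofNat,
    zero_mul, normSq_apply, add_zero, sub_re, one_re]
  field_simp
  ring

theorem Complex.im_sq_sub_one_div_two_mul_neg {z : ℂ} (hz : z.im < 0) :
    ((z ^ 2 - 1) / (2 * z)).im < 0 := by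
  have hpos : 0 < normSq z := normSq_pos.mpr fun h => by simp [h] at hz
  rw [im_sq_sub_one_div_two_mul]
  exact div_neg_of_neg_of_pos (mul_neg_of_neg_of_pos hz (by linarith)) (by linarith)

theorem Complex.add_neg_I_ne_zero_of_im_neg {z : ℂ} (hz : z.im < 0) : z + -I ≠ 0 := fun h => by
  have := congrArg im h
  simp only [add_im, neg_im, I_im, zero_im] at this
  linarith

theorem Complex.norm_cayley_neg_I_lt_one {z : ℂ} (hz : z.im < 0) : ‖cayley (-I) z‖ < 1 := by
  rw [cayley, norm_div, div_lt_one (norm_pos_iff.mpr (add_neg_I_ne_zero_of_im_neg hz)),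
    ← sq_lt_sq₀ (norm_nonneg _) (norm_nonneg _), Complex.sq_norm, Complex.sq_norm, normSq_apply, normSq_apply]
  simp only [sub_re, sub_im, add_re, add_im, neg_re, neg_im, I_re, I_im]
  nlinarith

/-- The Newton–Raphson iteration for `z² + 1` started in the open lower half-plane
converges to the root `−i`. -/
theorem newton_converges_to_neg_i
    (z : ℕ → ℂ) (hrec : ∀ n : ℕ, z (n + 1) = (z n ^ 2 - 1) / (2 * z n))
    (h0 : (z 0).im < 0) :
    Filter.Tendsto z Filter.atTop (nhds (-Complex.I)) := by
  have him : ∀ n, (z n).im < 0 := fun n => by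
    induction n with
    | zero => exact h0
    | succ n ih => exact hrec n ▸ im_sq_sub_one_div_two_mul_neg ih
  have hrec' : ∀ n, z (n + 1) = (z n ^ 2 + (-I) ^ 2) / (2 * z n) := by
    simpa [sub_eq_add_neg] using hrec
  have hz : ∀ n, z n ≠ 0 := fun n h => by simpa [h] using him n
  refine tendsto_of_tendsto_cayley_zero (neg_ne_zero.mpr I_ne_zero)
    (fun n => add_neg_I_ne_zero_of_im_neg (him n)) ?_
  exact (tendsto_pow_two_pow_nhds_zero_of_norm_lt_one (norm_cayley_neg_I_lt_one h0)).congr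
    fun n => (cayley_newton_iterate hrec' hz n).symm
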